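/- arXiv:1109.0715 — 2 statements merged into one kernel-verified Lean document; each statement's English description precedes it below -/
import Mathlib

section
/- The shuffle algebra S = ℂ⟨ξ_0,ξ_1⟩ satisfies S = S^{10}[ξ_1, ξ_0], where S^{10} = ℂ∅ ⊕ ξ_0 S ξ_1: every element of S decomposes uniquely as a finite sum Σ_{i,j} ξ_1^{⧢i} ⧢ w_{ij} ⧢ ξ_0^{⧢j} with w_{ij} ∈ S^{10}. -/
noncomputable section
open scoped BigOperators

/-- The shuffle product of two words (letters: `false` = ξ_0, `true` = ξ_1),
as a formal ℂ-linear combination of words. -/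
def sh : List Bool → List Bool → (List Bool →₀ ℂ)
  | [], w => Finsupp.single w 1
  | a :: w1, [] => Finsupp.single (a :: w1) 1
  | a :: w1, b :: w2 =>
      (sh w1 (b :: w2)).mapDomain (a :: ·) + (sh (a :: w1) w2).mapDomain (b :: ·)
  termination_by w1 w2 => w1.length + w2.length

/-- The bilinear extension of the shuffle product to S = ℂ⟨ξ_0,ξ_1⟩. -/
def shProd (f g : List Bool →₀ ℂ) : List Bool →₀ ℂ :=
  f.sum fun u cu => g.sum fun v cv => (cu * cv) • sh u v

/-- Iterated shuffle powers. -/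
def shPow (f : List Bool →₀ ℂ) : ℕ → (List Bool →₀ ℂ)
  | 0 => Finsupp.single [] 1
  | n + 1 => shProd f (shPow f n)

/-- The set of words spanning S^0: the empty word and the words ending with ξ_1. -/
def S0words : Set (List Bool) := {l | l = [] ∨ l.getLast? = some true}

/-- The set of words spanning S^{10}: the empty word and the words beginning
with ξ_0 and ending with ξ_1. -/
def S10words : Set (List Bool) :=
  {l | l = [] ∨ (l.head? = some false ∧ l.getLast? = some true)}

/-- The subspace S^0 = ℂ∅ ⊕ Sξ_1 of the shuffle algebra. -/
def S0 : Submodule ℂ (List Bool →₀ ℂ) := Finsupp.supported ℂ ℂ S0words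

/-- The subspace S^{10} = ℂ∅ ⊕ ξ_0Sξ_1 of the shuffle algebra. -/
def S10 : Submodule ℂ (List Bool →₀ ℂ) := Finsupp.supported ℂ ℂ S10words

/-!
Deleting a leading `ξ₁` and deleting a final `ξ₀` are derivations `∂₁`, `∂₀` of the shuffle
product (the second because `sh` satisfies the same recursion on last letters as on first
letters). Both lower the length of words, so they are locally nilpotent, and `∂₁ ξ₁ = 1 = ∂₀ ξ₀`.
For such a derivation `D` with a slice `s` (`D s = 1`) every element is uniquely a polynomial in
`s` with coefficients in `ker D`. Applied to `∂₁` on `S`, and then to `∂₀` on `ker ∂₁`, which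
contains `ξ₀` and is stable under `∂₀` since the two derivations commute, this writes `S` as
polynomials in `ξ₁, ξ₀` over `ker ∂₁ ∩ ker ∂₀ = S^{10}`.
-/
abbrev S := List Bool →₀ ℂ

lemma sh_nil_left (w : List Bool) : sh [] w = Finsupp.single w 1 := by cases w <;> rw [sh]

lemma sh_nil_right (w : List Bool) : sh w [] = Finsupp.single w 1 := by cases w <;> rw [sh]

lemma sh_cons_cons (a b : Bool) (u v : List Bool) :
    sh (a :: u) (b :: v) =
      (sh u (b :: v)).mapDomain (a :: ·) + (sh (a :: u) v).mapDomain (b :: ·) := by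
  rw [sh]

theorem sh_comm (u v : List Bool) : sh u v = sh v u := by
  match u, v with
  | [], v => rw [sh_nil_left, sh_nil_right]
  | a :: u, [] => rw [sh_nil_left, sh_nil_right]
  | a :: u, b :: v =>
    rw [sh_cons_cons, sh_cons_cons, add_comm, sh_comm (a :: u) v, sh_comm u (b :: v)]
termination_by u.length + v.length

lemma mapDomain_cons_mapDomain_concat (a b : Bool) (f : S) :
    (f.mapDomain (a :: ·)).mapDomain (· ++ [b]) = (f.mapDomain (· ++ [b])).mapDomain (a :: ·) := by
  rw [← Finsupp.mapDomain_comp, ← Finsupp.mapDomain_comp]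
  rfl

lemma sh_singleton_concat (a b : Bool) (v : List Bool) :
    sh [a] (v ++ [b]) = (sh [a] v).mapDomain (· ++ [b]) + Finsupp.single (v ++ [b, a]) 1 := by
  induction v with
  | nil => simp [sh_cons_cons, sh_nil_left, sh_nil_right]
  | cons c v ih =>
    rw [List.cons_append, sh_cons_cons, ih, sh_cons_cons]
    simp only [sh_nil_left, Finsupp.mapDomain_add, Finsupp.mapDomain_single,
      mapDomain_cons_mapDomain_concat, List.cons_append]
    abel

theorem sh_concat_concat (a b : Bool) (u v : List Bool) :
    sh (u ++ [a]) (v ++ [b]) =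
      (sh u (v ++ [b])).mapDomain (· ++ [a]) + (sh (u ++ [a]) v).mapDomain (· ++ [b]) := by
  match u, v with
  | [], v => simp [sh_singleton_concat, sh_nil_left, add_comm]
  | c :: u, [] =>
    rw [List.nil_append, sh_nil_right, sh_comm _ [b], sh_singleton_concat, sh_comm [b],
      Finsupp.mapDomain_single]
    simp
  | c :: u, d :: v =>
    have ih₁ := sh_concat_concat a b u (d :: v)
    have ih₂ := sh_concat_concat a b (c :: u) v
    simp only [List.cons_append] at ih₁ ih₂ ⊢
    rw [sh_cons_cons, ih₁, ih₂, sh_cons_cons c d u, sh_cons_cons c d (u ++ [a])]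
    simp only [Finsupp.mapDomain_add, mapDomain_cons_mapDomain_concat]
    abel
termination_by u.length + v.length

def shMul : S →ₗ[ℂ] S →ₗ[ℂ] S :=
  Finsupp.lsum ℂ fun u => LinearMap.toSpanSingleton ℂ (S →ₗ[ℂ] S)
    (Finsupp.lsum ℂ fun v => LinearMap.toSpanSingleton ℂ S (sh u v))

@[simp] lemma shMul_single_single (u v : List Bool) (a b : ℂ) :
    shMul (Finsupp.single u a) (Finsupp.single v b) = (a * b) • sh u v := by
  simp [shMul, mul_smul]

lemma shProd_eq_shMul (f g : S) : shProd f g = shMul f g := by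
  conv_rhs => rw [← Finsupp.sum_single f, ← Finsupp.sum_single g]
  simp only [shProd, map_finsuppSum, LinearMap.finsupp_sum_apply, shMul_single_single]
  exact Finsupp.sum_comm _ _ _

lemma shMul_comm (f g : S) : shMul f g = shMul g f := by
  induction f using Finsupp.induction_linear with
  | zero => simp
  | add f f' hf hf' => simp [hf, hf']
  | single u x =>
    induction g using Finsupp.induction_linear with
    | zero => simp
    | add g g' hg hg' => simp [hg, hg']
    | single v y => rw [shMul_single_single, shMul_single_single, sh_comm, mul_comm]

abbrev shOne : S := Finsupp.single [] 1

@[simp] lemma shMul_shOne_left (f : S) : shMul shOne f = f := by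
  induction f using Finsupp.induction_linear with
  | zero => simp
  | add f g hf hg => simp [hf, hg]
  | single v b => simp [sh_nil_left]

@[simp] lemma shMul_shOne_right (f : S) : shMul f shOne = f := by
  rw [shMul_comm, shMul_shOne_left]

lemma shPow_zero (f : S) : shPow f 0 = shOne := rfl

lemma shPow_succ (f : S) (n : ℕ) : shPow f (n + 1) = shMul f (shPow f n) := by
  rw [shPow, shProd_eq_shMul]

def IsShDerivation (D : S →ₗ[ℂ] S) : Prop :=
  ∀ f g, D (shMul f g) = shMul (D f) g + shMul f (D g)

lemma isShDerivation_of_sh {D : S →ₗ[ℂ] S}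
    (h : ∀ u v, D (sh u v) = shMul (D (Finsupp.single u 1)) (Finsupp.single v 1) +
      shMul (Finsupp.single u 1) (D (Finsupp.single v 1))) :
    IsShDerivation D := by
  have : shMul.compr₂ D = shMul ∘ₗ D + shMul.compl₂ D := by
    ext u v : 4
    simpa using h u v
  exact fun f g => LinearMap.congr_fun₂ this f g

def headDeriv (b : Bool) : S →ₗ[ℂ] S := Finsupp.lcomapDomain (b :: ·) List.cons_injective

def lastDeriv (b : Bool) : S →ₗ[ℂ] S :=
  Finsupp.lcomapDomain (· ++ [b]) (List.append_left_injective [b])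

@[simp] lemma headDeriv_apply (b : Bool) (f : S) (w : List Bool) : headDeriv b f w = f (b :: w) :=
  rfl

@[simp] lemma lastDeriv_apply (b : Bool) (f : S) (w : List Bool) :
    lastDeriv b f w = f (w ++ [b]) :=
  rfl

@[simp] lemma headDeriv_shOne (b : Bool) : headDeriv b shOne = 0 := by
  ext w
  simp

@[simp] lemma lastDeriv_shOne (b : Bool) : lastDeriv b shOne = 0 := by
  ext w
  simp

lemma headDeriv_mapDomain_cons (b c : Bool) (f : S) :
    headDeriv b (f.mapDomain (c :: ·)) = if c = b then f else 0 := by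
  ext w
  split_ifs with h
  · subst h; exact Finsupp.mapDomain_apply List.cons_injective f w
  · exact Finsupp.mapDomain_of_notMem_range _ _ (by simpa using h)

lemma lastDeriv_mapDomain_concat (b c : Bool) (f : S) :
    lastDeriv b (f.mapDomain (· ++ [c])) = if c = b then f else 0 := by
  ext w
  split_ifs with h
  · subst h; exact Finsupp.mapDomain_apply (List.append_left_injective [c]) f w
  · exact Finsupp.mapDomain_of_notMem_range _ _ (by simpa using h)

lemma headDeriv_commute_lastDeriv (b c : Bool) (f : S) :
    headDeriv b (lastDeriv c f) = lastDeriv c (headDeriv b f) := by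
  ext w
  simp

lemma isShDerivation_headDeriv (b : Bool) : IsShDerivation (headDeriv b) := by
  refine isShDerivation_of_sh fun u v => ?_
  match u, v with
  | [], v => simp [sh_nil_left]
  | a :: u, [] => simp [sh_nil_right]
  | a :: u, c :: v =>
    simp only [sh_cons_cons, map_add, headDeriv_mapDomain_cons, ← Finsupp.mapDomain_single]
    split_ifs <;> simp

lemma lastDeriv_single_concat (b a : Bool) (u : List Bool) (r : ℂ) :
    lastDeriv b (Finsupp.single (u ++ [a]) r) = if a = b then Finsupp.single u r else 0 := by
  simpa using lastDeriv_mapDomain_concat b a (Finsupp.single u r)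

lemma isShDerivation_lastDeriv (b : Bool) : IsShDerivation (lastDeriv b) := by
  refine isShDerivation_of_sh fun u v => ?_
  rcases List.eq_nil_or_concat u with rfl | ⟨u, a, rfl⟩
  · simp [sh_nil_left]
  rcases List.eq_nil_or_concat v with rfl | ⟨v, c, rfl⟩
  · simp [sh_nil_right]
  simp only [List.concat_eq_append, sh_concat_concat, map_add, lastDeriv_mapDomain_concat,
    lastDeriv_single_concat]
  split_ifs <;> simp

lemma exists_pow_apply_eq_zero {D : S →ₗ[ℂ] S}
    (hD : ∀ f w, ∃ w' : List Bool, w'.length = w.length + 1 ∧ D f w = f w') (f : S) :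
    ∃ n, (D ^ n) f = 0 := by
  have key : ∀ n f w, ∃ w' : List Bool, w'.length = w.length + n ∧ (D ^ n) f w = f w' := by
    intro n
    induction n with
    | zero => exact fun f w => ⟨w, rfl, rfl⟩
    | succ n ih =>
      intro f w
      obtain ⟨w₁, hw₁, e₁⟩ := ih (D f) w
      obtain ⟨w₂, hw₂, e₂⟩ := hD f w₁
      exact ⟨w₂, by omega, by rw [pow_succ, Module.End.mul_apply, e₁, e₂]⟩
  refine ⟨f.support.sup List.length + 1, Finsupp.ext fun w => ?_⟩
  obtain ⟨w', hw', e⟩ := key _ f w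
  rw [e, Finsupp.coe_zero, Pi.zero_apply, ← Finsupp.notMem_support_iff]
  intro hw
  have := Finset.le_sup (f := List.length) hw
  omega

lemma exists_pow_headDeriv_eq_zero (b : Bool) (f : S) : ∃ n, (headDeriv b ^ n) f = 0 :=
  exists_pow_apply_eq_zero (fun _ w => ⟨b :: w, rfl, rfl⟩) f

lemma exists_pow_lastDeriv_eq_zero (b : Bool) (f : S) : ∃ n, (lastDeriv b ^ n) f = 0 :=
  exists_pow_apply_eq_zero (fun _ w => ⟨w ++ [b], by simp, rfl⟩) f

namespace IsShDerivation

variable {D : S →ₗ[ℂ] S} (hD : IsShDerivation D)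
include hD

lemma map_shOne : D shOne = 0 := by
  simpa using hD shOne shOne

lemma shMul_mem_ker {f g : S} (hf : D f = 0) (hg : D g = 0) : D (shMul f g) = 0 := by
  simp [hD f g, hf, hg]

lemma shPow_mem_ker {s : S} (hs : D s = 0) (n : ℕ) : D (shPow s n) = 0 := by
  induction n with
  | zero => exact hD.map_shOne
  | succ n ih => rw [shPow_succ]; exact hD.shMul_mem_ker hs ih

variable {s : S} (hs : D s = shOne)
include hs

lemma map_shPow (n : ℕ) : D (shPow s n) = (n : ℂ) • shPow s (n - 1) := by
  induction n with
  | zero => simpa [shPow_zero] using hD.map_shOne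
  | succ n ih =>
    rw [shPow_succ, hD, hs, shMul_shOne_left, ih, map_smul]
    rcases n with _ | n
    · simp
    · rw [Nat.add_sub_cancel, ← shPow_succ]
      push_cast
      module

lemma map_shMul_shPow {a : S} (ha : D a = 0) (n : ℕ) :
    D (shMul (shPow s n) a) = (n : ℂ) • shMul (shPow s (n - 1)) a := by
  simp [hD _ a, ha, hD.map_shPow hs]

lemma pow_apply_shMul_shPow {a : S} (ha : D a = 0) (n k : ℕ) :
    (D ^ k) (shMul (shPow s n) a) = (n.descFactorial k : ℂ) • shMul (shPow s (n - k)) a := by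
  induction k with
  | zero => simp
  | succ k ih =>
    rw [pow_succ', Module.End.mul_apply, ih, map_smul, hD.map_shMul_shPow hs ha, smul_smul,
      Nat.descFactorial_succ, Nat.sub_sub]
    push_cast
    rw [mul_comm]

lemma pow_apply_shMul_shPow_self {a : S} (ha : D a = 0) (n : ℕ) :
    (D ^ n) (shMul (shPow s n) a) = (n.factorial : ℂ) • a := by
  rw [hD.pow_apply_shMul_shPow hs ha, Nat.descFactorial_self, Nat.sub_self, shPow_zero,
    shMul_shOne_left]

/-- Apply `D ^ n` for the largest `n` in the support: only the top coefficient survives. -/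
theorem eq_zero_of_sum_shMul_shPow {a : ℕ →₀ S} (ha : ∀ i, D (a i) = 0)
    (h : (a.sum fun i x => shMul (shPow s i) x) = 0) : a = 0 := by
  by_contra hne
  have hsupp : a.support.Nonempty := Finsupp.support_nonempty_iff.mpr hne
  set n := a.support.max' hsupp
  have hn : n ∈ a.support := a.support.max'_mem hsupp
  have htop : (D ^ n) (a.sum fun i x => shMul (shPow s i) x) = (n.factorial : ℂ) • a n := by
    rw [map_finsuppSum, Finsupp.sum_eq_single n, hD.pow_apply_shMul_shPow_self hs (ha n)]
    · intro i hi hin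
      have hlt : i < n := lt_of_le_of_ne (a.support.le_max' i (Finsupp.mem_support_iff.mpr hi)) hin
      rw [hD.pow_apply_shMul_shPow hs (ha i), Nat.descFactorial_eq_zero_iff_lt.mpr hlt,
        Nat.cast_zero, zero_smul]
    · simp
  rw [h, map_zero, eq_comm, smul_eq_zero] at htop
  exact Finsupp.mem_support_iff.mp hn (htop.resolve_left (by exact_mod_cast n.factorial_ne_zero))

/-- Subtracting `s ^ n / n! ⧢ D ^ n f` lowers the nilpotency order of `f`. -/
theorem mem_span_shMul_shPow {K : Submodule ℂ S} (hKpow : ∀ n, shPow s n ∈ K)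
    (hKmul : ∀ f ∈ K, ∀ g ∈ K, shMul f g ∈ K) (hDK : ∀ f ∈ K, D f ∈ K)
    {f : S} (hf : f ∈ K) (n : ℕ) (hn : (D ^ n) f = 0) :
    f ∈ Submodule.span ℂ {g | ∃ i a, a ∈ K ∧ D a = 0 ∧ g = shMul (shPow s i) a} := by
  induction n generalizing f with
  | zero => simp_all
  | succ n ih =>
    set a := (D ^ n) f
    have ha : D a = 0 := by rwa [← Module.End.mul_apply, ← pow_succ']
    have haK : a ∈ K := Module.End.pow_apply_mem_of_forall_mem n hDK f hf
    set g := (n.factorial : ℂ)⁻¹ • shMul (shPow s n) a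
    have hgK : g ∈ K := K.smul_mem _ (hKmul _ (hKpow n) _ haK)
    have hg : (D ^ n) g = a := by
      rw [map_smul, hD.pow_apply_shMul_shPow_self hs ha, smul_smul,
        inv_mul_cancel₀ (by exact_mod_cast n.factorial_ne_zero), one_smul]
    rw [← sub_add_cancel f g]
    refine add_mem (ih (sub_mem hf hgK) (by rw [map_sub, hg, sub_self])) ?_
    exact Submodule.smul_mem _ _ (Submodule.subset_span ⟨n, a, haK, ha, rfl⟩)

end IsShDerivation

lemma notMem_S10words_iff (w : List Bool) :
    w ∉ S10words ↔ w.head? = some true ∨ w.getLast? = some false := by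
  rcases w with _ | ⟨a, t⟩
  · simp [S10words]
  · simp only [S10words, Set.mem_ofPred_eq, List.getLast?_cons, List.head?_cons, reduceCtorEq,
      false_or, Option.some.injEq]
    generalize t.getLast?.getD a = b
    cases a <;> cases b <;> simp

lemma mem_S10_iff {f : S} : f ∈ S10 ↔ headDeriv true f = 0 ∧ lastDeriv false f = 0 := by
  simp only [S10, Finsupp.mem_supported', notMem_S10words_iff, List.head?_eq_some_iff,
    List.getLast?_eq_some_iff, Finsupp.ext_iff, headDeriv_apply, lastDeriv_apply,
    Finsupp.coe_zero, Pi.zero_apply]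
  constructor
  · intro h
    exact ⟨fun w => h _ (Or.inl ⟨w, rfl⟩), fun w => h _ (Or.inr ⟨w, rfl⟩)⟩
  · rintro ⟨h₁, h₀⟩ w (⟨u, rfl⟩ | ⟨u, rfl⟩)
    exacts [h₁ u, h₀ u]

abbrev ξ₀ : S := Finsupp.single [false] 1
abbrev ξ₁ : S := Finsupp.single [true] 1

@[simp] lemma headDeriv_ξ₁ : headDeriv true ξ₁ = shOne := by
  ext w
  simp [Finsupp.single_apply, eq_comm]

@[simp] lemma headDeriv_ξ₀ : headDeriv true ξ₀ = 0 := by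
  ext w
  simp

@[simp] lemma lastDeriv_ξ₀ : lastDeriv false ξ₀ = shOne := by
  ext w
  simp [Finsupp.single_apply, eq_comm]

def polyEval : (ℕ × ℕ →₀ S) →ₗ[ℂ] S :=
  Finsupp.lsum ℂ fun p => shMul (shPow ξ₁ p.1) ∘ₗ shMul.flip (shPow ξ₀ p.2)

lemma polyEval_apply (c : ℕ × ℕ →₀ S) :
    polyEval c = c.sum fun p w => shMul (shPow ξ₁ p.1) (shMul w (shPow ξ₀ p.2)) :=
  rfl

theorem exists_polyEval_eq (u : S) : ∃ c : ℕ × ℕ →₀ S, (∀ p, c p ∈ S10) ∧ polyEval c = u := by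
  let E := LinearMap.range (polyEval ∘ₗ Finsupp.mapRange.linearMap S10.subtype)
  suffices u ∈ E by
    obtain ⟨c, rfl⟩ := this
    exact ⟨_, fun p => (c p).2, rfl⟩
  have hD₁ := isShDerivation_headDeriv true
  have hD₀ := isShDerivation_lastDeriv false
  obtain ⟨m, hm⟩ := exists_pow_headDeriv_eq_zero true u
  have hu := hD₁.mem_span_shMul_shPow headDeriv_ξ₁ (K := ⊤) (by simp) (by simp) (by simp)
    Submodule.mem_top m hm
  refine Submodule.span_le.mpr ?_ hu
  rintro _ ⟨i, a, -, ha, rfl⟩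
  obtain ⟨n, hn⟩ := exists_pow_lastDeriv_eq_zero false a
  have ha' := hD₀.mem_span_shMul_shPow lastDeriv_ξ₀ (K := LinearMap.ker (headDeriv true))
    (hD₁.shPow_mem_ker headDeriv_ξ₀) (fun f hf g hg => hD₁.shMul_mem_ker hf hg)
    (fun f hf => by rw [LinearMap.mem_ker, headDeriv_commute_lastDeriv, hf, map_zero]) ha n hn
  refine (Submodule.span_le (p := E.comap (shMul (shPow ξ₁ i)))).mpr ?_ ha'
  rintro _ ⟨j, b, hb, hb', rfl⟩
  exact ⟨Finsupp.single (i, j) ⟨b, mem_S10_iff.mpr ⟨hb, hb'⟩⟩, by simp [polyEval_apply, shMul_comm]⟩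

theorem polyEval_eq_zero {c : ℕ × ℕ →₀ S} (hc : ∀ p, c p ∈ S10) (h : polyEval c = 0) :
    c = 0 := by
  have hD₁ := isShDerivation_headDeriv true
  have hD₀ := isShDerivation_lastDeriv false
  let y := c.curry.mapRange (fun r => r.sum fun j b => shMul (shPow ξ₀ j) b) Finsupp.sum_zero_index
  have hyi : ∀ i, y i = (c.curry i).sum fun j b => shMul (shPow ξ₀ j) b := fun i =>
    Finsupp.mapRange_apply ..
  have hy : polyEval c = y.sum fun i x => shMul (shPow ξ₁ i) x := by
    rw [polyEval_apply,
      ← Finsupp.sum_curry_index c fun i j w => shMul (shPow ξ₁ i) (shMul w (shPow ξ₀ j))]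
    rw [Finsupp.sum_mapRange_index (by simp)]
    simp [map_finsuppSum, shMul_comm]
  have hyker : ∀ i, headDeriv true (y i) = 0 := by
    intro i
    rw [hyi, map_finsuppSum]
    refine Finset.sum_eq_zero fun j _ => hD₁.shMul_mem_ker (hD₁.shPow_mem_ker headDeriv_ξ₀ j) ?_
    exact (mem_S10_iff.mp (hc (i, j))).1
  have hy0 : y = 0 := hD₁.eq_zero_of_sum_shMul_shPow headDeriv_ξ₁ hyker (hy ▸ h)
  have hcurry : ∀ i, c.curry i = 0 := fun i =>
    hD₀.eq_zero_of_sum_shMul_shPow lastDeriv_ξ₀ (fun j => (mem_S10_iff.mp (hc (i, j))).2)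
      (by rw [← hyi, hy0, Finsupp.zero_apply])
  ext ⟨i, j⟩ : 1
  rw [← Finsupp.curry_apply, hcurry, Finsupp.zero_apply, Finsupp.zero_apply]

/-- S = S^{10}[ξ_1, ξ_0] — every element u of the shuffle algebra S
is uniquely a finite sum u = Σ_{i,j} ξ_1^{⧢i} ⧢ w_{ij} ⧢ ξ_0^{⧢j} with w_{ij} ∈ S^{10}. -/
theorem shuffle_decomposition_S10 (u : List Bool →₀ ℂ) :
    ∃! c : ℕ × ℕ →₀ (List Bool →₀ ℂ),
      (∀ p, c p ∈ S10) ∧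
      u = c.sum fun p w =>
        shProd (shPow (Finsupp.single [true] 1) p.1)
          (shProd w (shPow (Finsupp.single [false] 1) p.2)) := by
  have hsum : ∀ c : ℕ × ℕ →₀ S, (c.sum fun p w => shProd (shPow ξ₁ p.1) (shProd w (shPow ξ₀ p.2)))
      = polyEval c := fun c => by simp only [shProd_eq_shMul, polyEval_apply]
  obtain ⟨c, hc, rfl⟩ := exists_polyEval_eq u
  refine ⟨c, ⟨hc, (hsum c).symm⟩, fun c' ⟨hc', h⟩ => ?_⟩
  rw [hsum] at h
  exact sub_eq_zero.mp <|
    polyEval_eq_zero (fun p => sub_mem (hc' p) (hc p)) (by rw [map_sub, ← h, sub_self])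
end
end

section
/- The five term relation for dilogarithms holds: for real z_1, z_2 with 0 < z_1, z_2 < 1, Li_2(z_1 z_2) = Li_2(−z_1(1−z_2)/(1−z_1)) + Li_2(−z_2(1−z_1)/(1−z_2)) + Li_2(z_1) + Li_2(z_2) + (1/2)·log²((1−z_1)/(1−z_2)). -/
noncomputable section

/-- The dilogarithm Li_2(x) = Σ_{n≥1} x^n/n², extended analytically to x < 1 via the
standard integral representation Li_2(x) = −∫_0^x log(1−t)/t dt. -/
def Li2 (x : ℝ) : ℝ := -∫ t in (0:ℝ)..x, Real.log (1 - t) / t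

/-!
By the fundamental theorem of calculus, `Li2` is differentiable on `(-∞, 1)` with derivative
`-log (1 - x) / x`. Landen's identity `Li2 (-z/(1-z)) + Li2 z + ½ log² (1 - z) = 0` follows by
checking that the left side has zero derivative and vanishes at `0`. For the five term relation,
fix `z₂` and view the difference of the two sides as a function of `z₁`: its derivative is a
combination of logarithms of `1 - z₁`, `1 - z₂` and `1 - z₁ z₂` that cancels, and at `z₁ = 0` it
reduces to Landen's identity for `z₂`.
-/

open Real Set intervalIntegral

/-- `dslope` fills in the removable singularity at `0` of the integrand `-log (1 - t) / t`
of `Li2`. -/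
lemma continuousOn_dslope_neg_log_one_sub :
    ContinuousOn (dslope (fun t : ℝ => -log (1 - t)) 0) (Iio 1) := by
  refine (continuousOn_dslope (Iio_mem_nhds one_pos)).2 ⟨?_, ?_⟩
  · intro x hx
    have : 1 - x ≠ 0 := by linarith [mem_Iio.1 hx]
    fun_prop (disch := assumption)
  · fun_prop (disch := norm_num)

lemma Li2_eq_integral_dslope (x : ℝ) :
    Li2 x = ∫ t in (0 : ℝ)..x, dslope (fun t : ℝ => -log (1 - t)) 0 t := by
  rw [Li2, ← integral_neg]
  refine integral_congr_ae ?_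
  filter_upwards [MeasureTheory.Measure.ae_ne MeasureTheory.volume 0] with t ht _
  rw [dslope_of_ne _ ht, slope_def_field]
  simp [neg_div]

lemma hasDerivAt_Li2 {x : ℝ} (hx : x < 1) :
    HasDerivAt Li2 (dslope (fun t : ℝ => -log (1 - t)) 0 x) x := by
  have hsub : uIcc 0 x ⊆ Iio 1 := fun t ht => ht.2.trans_lt (max_lt one_pos hx)
  rw [funext Li2_eq_integral_dslope]
  exact integral_hasDerivAt_right (continuousOn_dslope_neg_log_one_sub.mono hsub).intervalIntegrable
    (continuousOn_dslope_neg_log_one_sub.stronglyMeasurableAtFilter isOpen_Iio x hx)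
    (continuousOn_dslope_neg_log_one_sub.continuousAt (Iio_mem_nhds hx))

lemma hasDerivAt_Li2_of_ne {x : ℝ} (hx : x < 1) (hx0 : x ≠ 0) :
    HasDerivAt Li2 (-log (1 - x) / x) x := by
  simpa [dslope_of_ne _ hx0, slope_def_field] using hasDerivAt_Li2 hx

@[simp]
lemma Li2_zero : Li2 0 = 0 := by simp [Li2]

@[fun_prop]
lemma ContinuousAt.Li2 {u : ℝ → ℝ} {x : ℝ} (hu : ContinuousAt u x) (h1 : u x < 1) :
    ContinuousAt (fun t => _root_.Li2 (u t)) x :=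
  (hasDerivAt_Li2 h1).continuousAt.comp hu

lemma HasDerivAt.Li2 {u : ℝ → ℝ} {u' x : ℝ} (hu : HasDerivAt u u' x) (h1 : u x < 1)
    (h0 : u x ≠ 0) : HasDerivAt (fun t => _root_.Li2 (u t)) (-Real.log (1 - u x) / u x * u') x :=
  (hasDerivAt_Li2_of_ne h1 h0).comp x hu

lemma eq_of_hasDerivAt_eq_zero {f : ℝ → ℝ} {a b : ℝ} (hab : a ≤ b)
    (hf : ContinuousOn f (Icc a b)) (hf' : ∀ x ∈ Ioo a b, HasDerivAt f 0 x) : f a = f b := by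
  rcases hab.eq_or_lt with rfl | hab
  · rfl
  obtain ⟨c, -, hc⟩ := exists_hasDerivAt_eq_slope f (fun _ => 0) hab hf hf'
  rw [eq_comm, div_eq_zero_iff, sub_eq_zero, sub_eq_zero] at hc
  exact (hc.resolve_right hab.ne').symm

lemma hasDerivAt_landen {x : ℝ} (hx1 : x < 1) (hx0 : x ≠ 0) :
    HasDerivAt (fun t => Li2 (-t / (1 - t)) + Li2 t + 1 / 2 * log (1 - t) ^ 2) 0 x := by
  have h1x : 1 - x ≠ 0 := by linarith
  have hid := hasDerivAt_id' x
  have hu : HasDerivAt (fun t => -t / (1 - t)) (-1 / (1 - x) ^ 2) x :=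
    (hid.fun_neg.fun_div (hid.const_sub 1) h1x).congr_deriv (by ring)
  have hu1 : -x / (1 - x) < 1 := by rw [div_lt_one (by linarith)]; linarith
  have hu0 : -x / (1 - x) ≠ 0 := div_ne_zero (neg_ne_zero.2 hx0) h1x
  have hlog : HasDerivAt (fun t => log (1 - t)) (-1 / (1 - x)) x :=
    (hid.const_sub 1).log h1x
  refine (((hu.Li2 hu1 hu0).add (hasDerivAt_Li2_of_ne hx1 hx0)).add
    ((hlog.pow 2).const_mul (1 / 2))).congr_deriv ?_
  have h1u : 1 - -x / (1 - x) = (1 - x)⁻¹ := by field_simp; ring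
  rw [h1u, log_inv]
  field_simp
  ring

lemma continuousOn_landen :
    ContinuousOn (fun t => Li2 (-t / (1 - t)) + Li2 t + 1 / 2 * log (1 - t) ^ 2) (Iio 1) := by
  intro x (hx1 : x < 1)
  have h1x : 1 - x ≠ 0 := by linarith
  have hu1 : -x / (1 - x) < 1 := by rw [div_lt_one (by linarith)]; linarith
  exact ContinuousAt.continuousWithinAt (by fun_prop (disch := assumption))

theorem Li2_landen {z : ℝ} (hz : z < 1) :
    Li2 (-z / (1 - z)) + Li2 z + 1 / 2 * log (1 - z) ^ 2 = 0 := by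
  set G := fun t => Li2 (-t / (1 - t)) + Li2 t + 1 / 2 * log (1 - t) ^ 2
  have hG0 : G 0 = 0 := by simp [G]
  suffices G 0 = G z by rwa [hG0, eq_comm] at this
  rcases le_total 0 z with h | h
  · exact eq_of_hasDerivAt_eq_zero h (continuousOn_landen.mono fun x hx => hx.2.trans_lt hz)
      fun x hx => hasDerivAt_landen (hx.2.trans hz) hx.1.ne'
  · exact (eq_of_hasDerivAt_eq_zero h (continuousOn_landen.mono fun x hx => hx.2.trans_lt one_pos)
      fun x hx => hasDerivAt_landen (hx.2.trans one_pos) hx.2.ne).symm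

def fiveTermDefect (z t : ℝ) : ℝ :=
  Li2 (t * z) - (Li2 (-t * (1 - z) / (1 - t)) + Li2 (-z * (1 - t) / (1 - z)) + Li2 t + Li2 z
    + 1 / 2 * log ((1 - t) / (1 - z)) ^ 2)

lemma fiveTermDefect_zero {z : ℝ} (hz : z < 1) : fiveTermDefect z 0 = 0 := by
  have h := Li2_landen hz
  simp only [fiveTermDefect, zero_mul, neg_zero, zero_div, Li2_zero, sub_zero, mul_one, one_div,
    log_inv, neg_sq]
  linarith

section

variable {z : ℝ} (hz0 : 0 < z) (hz1 : z < 1)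
include hz0 hz1

lemma fiveTermDefect_args_lt_one {x : ℝ} (hx : x < 1) :
    x * z < 1 ∧ -x * (1 - z) / (1 - x) < 1 ∧ -z * (1 - x) / (1 - z) < 1 := by
  have hxz : x * z < 1 := by nlinarith
  refine ⟨hxz, ?_, ?_⟩
  · rw [div_lt_one (by linarith)]; linarith
  · rw [div_lt_one (by linarith)]; linarith

lemma continuousOn_fiveTermDefect : ContinuousOn (fiveTermDefect z) (Iio 1) := by
  intro x (hx1 : x < 1)
  obtain ⟨h1, h2, h3⟩ := fiveTermDefect_args_lt_one hz0 hz1 hx1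
  have h1x : 1 - x ≠ 0 := by linarith
  have h1z : 1 - z ≠ 0 := by linarith
  have hq : (1 - x) / (1 - z) ≠ 0 := div_ne_zero h1x h1z
  exact ContinuousAt.continuousWithinAt (by unfold fiveTermDefect; fun_prop (disch := assumption))

lemma hasDerivAt_fiveTermDefect {x : ℝ} (hx1 : x < 1) (hx0 : x ≠ 0) :
    HasDerivAt (fiveTermDefect z) 0 x := by
  obtain ⟨h1, h2, h3⟩ := fiveTermDefect_args_lt_one hz0 hz1 hx1
  have h1x : 1 - x ≠ 0 := by linarith
  have h1z : 1 - z ≠ 0 := by linarith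
  have h1xz : 1 - x * z ≠ 0 := by linarith
  have hid := hasDerivAt_id' x
  have hm := hid.mul_const z
  have hψ : HasDerivAt (fun t => -t * (1 - z) / (1 - t)) (-(1 - z) / (1 - x) ^ 2) x :=
    ((hid.fun_neg.mul_const (1 - z)).fun_div (hid.const_sub 1) h1x).congr_deriv
      (by field_simp; ring)
  have hφ : HasDerivAt (fun t => -z * (1 - t) / (1 - z)) (z / (1 - z)) x :=
    (((hid.const_sub 1).const_mul (-z)).div_const (1 - z)).congr_deriv (by ring)
  have hlog : HasDerivAt (fun t => log ((1 - t) / (1 - z))) (-1 / (1 - x)) x :=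
    (((hid.const_sub 1).div_const (1 - z)).log (div_ne_zero h1x h1z)).congr_deriv
      (by field_simp)
  have hm0 : x * z ≠ 0 := mul_ne_zero hx0 hz0.ne'
  have hψ0 : -x * (1 - z) / (1 - x) ≠ 0 := div_ne_zero (mul_ne_zero (neg_ne_zero.2 hx0) h1z) h1x
  have hφ0 : -z * (1 - x) / (1 - z) ≠ 0 :=
    div_ne_zero (mul_ne_zero (neg_ne_zero.2 hz0.ne') h1x) h1z
  refine ((hm.Li2 h1 hm0).sub (((((hψ.Li2 h2 hψ0).add (hφ.Li2 h3 hφ0)).add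
    (hasDerivAt_Li2_of_ne hx1 hx0)).add (hasDerivAt_const x (Li2 z))).add
    ((hlog.pow 2).const_mul (1 / 2)))).congr_deriv ?_
  have hψ1 : 1 - -x * (1 - z) / (1 - x) = (1 - x * z) / (1 - x) := by field_simp; ring
  have hφ1 : 1 - -z * (1 - x) / (1 - z) = (1 - x * z) / (1 - z) := by field_simp; ring
  rw [hψ1, hφ1, log_div h1xz h1x, log_div h1xz h1z, log_div h1x h1z]
  field_simp
  ring

end

/-- the five term relation for dilogarithms — for real 0 < z₁, z₂ < 1,
Li_2(z₁z₂) = Li_2(−z₁(1−z₂)/(1−z₁)) + Li_2(−z₂(1−z₁)/(1−z₂)) + Li_2(z₁) + Li_2(z₂)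
+ (1/2)·log²((1−z₁)/(1−z₂)). -/
theorem five_term_relation (z1 z2 : ℝ)
    (h10 : 0 < z1) (h11 : z1 < 1) (h20 : 0 < z2) (h21 : z2 < 1) :
    Li2 (z1 * z2)
      = Li2 (-z1 * (1 - z2) / (1 - z1)) + Li2 (-z2 * (1 - z1) / (1 - z2))
        + Li2 z1 + Li2 z2
        + (1 / 2) * (Real.log ((1 - z1) / (1 - z2))) ^ 2 := by
  have h := eq_of_hasDerivAt_eq_zero h10.le
    ((continuousOn_fiveTermDefect h20 h21).mono fun x hx => hx.2.trans_lt h11)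
    fun x hx => hasDerivAt_fiveTermDefect h20 h21 (hx.2.trans h11) hx.1.ne'
  rw [fiveTermDefect_zero h21, eq_comm, fiveTermDefect, sub_eq_zero] at h
  exact h

end
end
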